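/- arXiv:math/0401397 — 2 statements merged into one kernel-verified Lean document; each statement's English description precedes it below -/
import Mathlib

section
/- Let Ω ⊆ ℝ^n be open, U ⊆ Ω open with compact closure contained in Ω, Γ ⊆ ℝ^n∖{0} a conic set, and m ∈ ℝ. Let (a_ε)_{ε∈(0,1]} be a slow scale net of symbols of order m on Ω×ℝ^n, and suppose there are strongly positive slow scale nets (r_ε)_ε and (s_ε)_ε such that |a_ε(x,ξ)| ≥ (1/s_ε)⟨ξ⟩^m for all (x,ξ) ∈ U×Γ with |ξ| ≥ r_ε and all ε ∈ (0,1]. Then for all multi-indices α, β there exists a strongly positive slow scale net (λ_ε)_ε such that |∂_ξ^α ∂_x^β a_ε(x,ξ)| ≤ λ_ε |a_ε(x,ξ)| ⟨ξ⟩^{-|α|} for all (x,ξ) ∈ U×Γ with |ξ| ≥ r_ε and all ε ∈ (0,1]. -/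
open MeasureTheory Set

noncomputable section

/-- The parameter range `(0,1]` for `ε`. -/
def Eps : Set ℝ := Set.Ioc 0 1

/-- The Euclidean norm `|ξ|` on `ℝ^n`. -/
def euclNorm {n : ℕ} (ξ : Fin n → ℝ) : ℝ := Real.sqrt (∑ i, ξ i ^ 2)

/-- `⟨ξ⟩^m = (1+|ξ|²)^{m/2}`. -/
def jpow {n : ℕ} (m : ℝ) (ξ : Fin n → ℝ) : ℝ := (1 + ∑ i, ξ i ^ 2) ^ (m / 2)

/-- Strongly positive slow scale net. -/
def SlowScale (ω : ℝ → ℝ) : Prop :=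
  (∃ c > 0, ∀ ε ∈ Eps, c ≤ ω ε) ∧
  ∀ p : ℝ, 0 ≤ p → ∃ c > 0, ∀ ε ∈ Eps, ω ε ^ p ≤ c * ε⁻¹

/-- Directional derivative. -/
def pderivV {E F : Type*} [NormedAddCommGroup E] [NormedSpace ℝ E]
    [NormedAddCommGroup F] [NormedSpace ℝ F] (v : E) (f : E → F) : E → F :=
  fun x => fderiv ℝ f x v

/-- Iterated directional derivatives along a list of vectors. -/
def pderivL {E F : Type*} [NormedAddCommGroup E] [NormedSpace ℝ E]
    [NormedAddCommGroup F] [NormedSpace ℝ F] (vs : List E) (f : E → F) : E → F :=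
  vs.foldr pderivV f

/-- Coordinate direction in the `x`-variable of `Ω × ℝ^n`. -/
def xdir {n : ℕ} (i : Fin n) : (Fin n → ℝ) × (Fin n → ℝ) := (Pi.single i 1, 0)

/-- Coordinate direction in the `ξ`-variable of `Ω × ℝ^n`. -/
def xidir {n : ℕ} (i : Fin n) : (Fin n → ℝ) × (Fin n → ℝ) := (0, Pi.single i 1)

/-- `∂_ξ^α ∂_x^β f`, with multi-indices encoded as lists of coordinate directions. -/
def symD {n : ℕ} {F : Type*} [NormedAddCommGroup F] [NormedSpace ℝ F]
    (α β : List (Fin n)) (f : ((Fin n → ℝ) × (Fin n → ℝ)) → F) :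
    ((Fin n → ℝ) × (Fin n → ℝ)) → F :=
  pderivL (α.map xidir ++ β.map xdir) f

/-- `∂^α f` for functions on `ℝ^n`. -/
def finD {n : ℕ} {F : Type*} [NormedAddCommGroup F] [NormedSpace ℝ F]
    (α : List (Fin n)) (f : (Fin n → ℝ) → F) : (Fin n → ℝ) → F :=
  pderivL (α.map fun i => Pi.single i 1) f

/-- A conic subset of `ℝ^n ∖ {0}`. -/
def IsConic {n : ℕ} (Γ : Set (Fin n → ℝ)) : Prop :=
  (∀ ξ ∈ Γ, ξ ≠ 0) ∧ ∀ ξ ∈ Γ, ∀ t : ℝ, 0 < t → t • ξ ∈ Γ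

/-- Slow scale net of symbols of order `m` on `Ω × ℝ^n`. -/
def IsSlowScaleSymbolNet {n : ℕ} (Ω : Set (Fin n → ℝ)) (m : ℝ)
    (a : ℝ → ((Fin n → ℝ) × (Fin n → ℝ)) → ℂ) : Prop :=
  (∀ ε ∈ Eps, ContDiffOn ℝ (⊤ : ℕ∞) (a ε) (Ω ×ˢ Set.univ)) ∧
  ∀ K : Set (Fin n → ℝ), IsCompact K → K ⊆ Ω →
    ∃ ω : ℝ → ℝ, SlowScale ω ∧ ∀ α β : List (Fin n), ∃ c > 0, ∀ ε ∈ Eps, ∀ x ∈ K, ∀ ξ,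
      ‖symD α β (a ε) (x, ξ)‖ ≤ c * ω ε * jpow (m - α.length) ξ

/-- A positive constant times a product of slow scale nets is slow scale. -/
lemma slowScale_const_mul_mul {c : ℝ} (hc : 0 < c) {ω s : ℝ → ℝ}
    (hω : SlowScale ω) (hs : SlowScale s) :
    SlowScale (fun ε => c * ω ε * s ε) := by
  obtain ⟨⟨cω, hcω, hωlb⟩, hωub⟩ := hω
  obtain ⟨⟨cs, hcs, hslb⟩, hsub⟩ := hs
  constructor
  · refine ⟨c * cω * cs, by positivity, fun ε hε => ?_⟩
    have h1 := hωlb ε hε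
    have h2 := hslb ε hε
    have hω0 : (0:ℝ) < ω ε := lt_of_lt_of_le hcω h1
    show c * cω * cs ≤ c * ω ε * s ε
    gcongr
  · intro p hp
    obtain ⟨C1, hC1, h1⟩ := hωub (2 * p) (by linarith)
    obtain ⟨C2, hC2, h2⟩ := hsub (2 * p) (by linarith)
    refine ⟨c ^ p * (C1 + C2), by positivity, fun ε hε => ?_⟩
    have hε0 : 0 < ε := hε.1
    have hω0 : (0:ℝ) < ω ε := lt_of_lt_of_le hcω (hωlb ε hε)
    have hs0 : (0:ℝ) < s ε := lt_of_lt_of_le hcs (hslb ε hε)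
    have key : (ω ε) ^ p * (s ε) ^ p ≤ (C1 + C2) * ε⁻¹ := by
      have hx : (0:ℝ) < (ω ε) ^ p := Real.rpow_pos_of_pos hω0 p
      have hy : (0:ℝ) < (s ε) ^ p := Real.rpow_pos_of_pos hs0 p
      have hxy : (ω ε) ^ p * (s ε) ^ p
          ≤ (ω ε) ^ p * (ω ε) ^ p + (s ε) ^ p * (s ε) ^ p := by nlinarith
      have e1 : (ω ε) ^ p * (ω ε) ^ p = (ω ε) ^ (2 * p) := by
        rw [← Real.rpow_add hω0]; ring_nf
      have e2 : (s ε) ^ p * (s ε) ^ p = (s ε) ^ (2 * p) := by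
        rw [← Real.rpow_add hs0]; ring_nf
      calc (ω ε) ^ p * (s ε) ^ p
          ≤ (ω ε) ^ (2 * p) + (s ε) ^ (2 * p) := by rw [← e1, ← e2]; exact hxy
        _ ≤ C1 * ε⁻¹ + C2 * ε⁻¹ := add_le_add (h1 ε hε) (h2 ε hε)
        _ = (C1 + C2) * ε⁻¹ := by ring
    have hmul : (c * ω ε * s ε) ^ p = c ^ p * ((ω ε) ^ p * (s ε) ^ p) := by
      rw [Real.mul_rpow (by positivity) hs0.le, Real.mul_rpow hc.le hω0.le]
      ring
    rw [hmul, mul_assoc]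
    exact mul_le_mul_of_nonneg_left key (Real.rpow_pos_of_pos hc p).le

/-- lower-order derivative bounds at micro-elliptic points
(Proposition `proposition_lower_order` (i)). -/
theorem statement0 {n : ℕ} (Ω : Set (Fin n → ℝ)) (hΩ : IsOpen Ω)
    (U : Set (Fin n → ℝ)) (hUopen : IsOpen U) (hUcomp : IsCompact (closure U))
    (hUΩ : closure U ⊆ Ω)
    (Γ : Set (Fin n → ℝ)) (hΓ : IsConic Γ)
    (m : ℝ) (a : ℝ → ((Fin n → ℝ) × (Fin n → ℝ)) → ℂ)
    (ha : IsSlowScaleSymbolNet Ω m a)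
    (r s : ℝ → ℝ) (hr : SlowScale r) (hs : SlowScale s)
    (hell : ∀ ε ∈ Eps, ∀ x ∈ U, ∀ ξ ∈ Γ, r ε ≤ euclNorm ξ →
      (s ε)⁻¹ * jpow m ξ ≤ ‖a ε (x, ξ)‖) :
    ∀ α β : List (Fin n), ∃ lam : ℝ → ℝ, SlowScale lam ∧
      ∀ ε ∈ Eps, ∀ x ∈ U, ∀ ξ ∈ Γ, r ε ≤ euclNorm ξ →
        ‖symD α β (a ε) (x, ξ)‖ ≤ lam ε * ‖a ε (x, ξ)‖ * jpow (-(α.length : ℝ)) ξ := by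
  intro α β
  obtain ⟨ω, hω, hbd⟩ := ha.2 (closure U) hUcomp hUΩ
  obtain ⟨c, hc, hcbd⟩ := hbd α β
  refine ⟨fun ε => c * ω ε * s ε, slowScale_const_mul_mul hc hω hs, ?_⟩
  intro ε hε x hx ξ hξ hrξ
  obtain ⟨cω, hcω, hωlb⟩ := hω.1
  obtain ⟨cs, hcs, hslb⟩ := hs.1
  have hωpos : 0 < ω ε := lt_of_lt_of_le hcω (hωlb ε hε)
  have hspos : 0 < s ε := lt_of_lt_of_le hcs (hslb ε hε)
  have hS : (0:ℝ) < 1 + ∑ i, ξ i ^ 2 := by positivity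
  have hsplit : jpow (m - (α.length : ℝ)) ξ
      = jpow m ξ * jpow (-(α.length : ℝ)) ξ := by
    unfold jpow
    rw [← Real.rpow_add hS]
    ring_nf
  have hjneg : 0 < jpow (-(α.length : ℝ)) ξ := Real.rpow_pos_of_pos hS _
  have hell' : jpow m ξ ≤ s ε * ‖a ε (x, ξ)‖ := by
    have h := hell ε hε x hx ξ hξ hrξ
    have := mul_le_mul_of_nonneg_left h hspos.le
    rwa [← mul_assoc, mul_inv_cancel₀ hspos.ne', one_mul] at this
  calc ‖symD α β (a ε) (x, ξ)‖
      ≤ c * ω ε * jpow (m - (α.length : ℝ)) ξ :=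
        hcbd ε hε x (subset_closure hx) ξ
    _ = c * ω ε * (jpow m ξ * jpow (-(α.length : ℝ)) ξ) := by rw [hsplit]
    _ ≤ c * ω ε * (s ε * ‖a ε (x, ξ)‖ * jpow (-(α.length : ℝ)) ξ) := by
        have : jpow m ξ * jpow (-(α.length : ℝ)) ξ
            ≤ s ε * ‖a ε (x, ξ)‖ * jpow (-(α.length : ℝ)) ξ :=
          mul_le_mul_of_nonneg_right hell' hjneg.le
        exact mul_le_mul_of_nonneg_left this (by positivity)
    _ = c * ω ε * s ε * ‖a ε (x, ξ)‖ * jpow (-(α.length : ℝ)) ξ := by ring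
end
end

section
/- Let (c_ε)_{ε∈(0,1]} be a net of nonnegative real numbers and define u_ε : ℝ → ℝ by u_ε(x) = 1/(1 + c_ε x²). Then the following are equivalent: (a) there exists N ∈ ℕ such that for every k ∈ ℕ there is C > 0 with sup_{x∈[-1,1]} |u_ε^{(k)}(x)| ≤ C ε^{-N} for all ε ∈ (0,1] (i.e., the net (u_ε)_ε satisfies the G^∞-estimates near 0); (b) for every p ∈ ℕ there is C > 0 with c_ε^p ≤ C ε^{-1} for all ε ∈ (0,1] (i.e., (c_ε)_ε has slow scale growth). -/
/-!
Substituting `t = √c * y` in `u_c y = 1 / (1 + c * y ^ 2)` reduces everything to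
`g t = 1 / (1 + t ^ 2) = Re (1 - i t)⁻¹`, whose `k`-th derivative is
`Re (k! iᵏ (1 - i t)^(-k-1))`. Hence `|u_c⁽ᵏ⁾| ≤ k! c^(k/2)` on all of `ℝ`, while
`u_c⁽²ᵐ⁾(0) = (-1)ᵐ (2m)! cᵐ`. The upper bound turns slow scale growth into the estimates
with `N = 1`; conversely, the estimate at `x = 0` of order `k = 2p(N+1)` gives
`(c_ε^p ε)^(N+1) ≤ C`, so `c_ε^p ε` stays bounded.
-/

open MeasureTheory Set

noncomputable section

open Complex
open scoped Nat

lemma one_sub_I_mul_ofReal_ne_zero (t : ℝ) : 1 - I * t ≠ 0 := fun h => by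
  simpa using congrArg re h

lemma hasDerivAt_one_sub_I_mul_zpow (n : ℤ) (t : ℝ) :
    HasDerivAt (fun t : ℝ => (1 - I * t) ^ n) (-I * n * (1 - I * t) ^ (n - 1)) t := by
  have hinner : HasDerivAt (fun t : ℝ => 1 - I * t) (-I) t := by
    simpa using ((hasDerivAt_id (t : ℂ)).const_mul I).const_sub 1 |>.comp_ofReal
  rw [show -I * n * (1 - I * t) ^ (n - 1) = n * (1 - I * t) ^ (n - 1) * -I by ring]
  exact (hasDerivAt_zpow n _ (Or.inl (one_sub_I_mul_ofReal_ne_zero t))).comp t hinner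

lemma iteratedDeriv_one_sub_I_mul_inv (k : ℕ) :
    iteratedDeriv k (fun t : ℝ => (1 - I * t)⁻¹) =
      fun t : ℝ => k ! * I ^ k * (1 - I * t) ^ (-(k : ℤ) - 1) := by
  induction k with
  | zero => simp
  | succ k ih =>
    funext t
    rw [iteratedDeriv_succ, ih]
    convert ((hasDerivAt_one_sub_I_mul_zpow _ t).const_mul ((k ! : ℂ) * I ^ k)).deriv using 1
    rw [Nat.factorial_succ]
    push_cast
    ring_nf

lemma one_div_one_add_sq_eq_re (t : ℝ) : 1 / (1 + t ^ 2) = ((1 - I * t)⁻¹).re := by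
  simp [inv_re, normSq_apply, ← sq]

lemma iteratedDeriv_one_div_one_add_sq (k : ℕ) (t : ℝ) :
    iteratedDeriv k (fun t : ℝ => 1 / (1 + t ^ 2)) t =
      (k ! * I ^ k * (1 - I * t) ^ (-(k : ℤ) - 1)).re := by
  have hF : ContDiff ℝ k (fun t : ℝ => (1 - I * t)⁻¹) :=
    (contDiff_const.sub (contDiff_const.mul ofRealCLM.contDiff)).inv
      one_sub_I_mul_ofReal_ne_zero
  have hre : (fun t : ℝ => 1 / (1 + t ^ 2)) = reCLM ∘ fun t : ℝ => (1 - I * t)⁻¹ := by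
    funext t; simp only [Function.comp_apply, reCLM_apply, one_div_one_add_sq_eq_re]
  rw [hre, iteratedDeriv_eq_iteratedFDeriv, reCLM.iteratedFDeriv_comp_left hF.contDiffAt le_rfl,
    ContinuousLinearMap.compContinuousMultilinearMap_coe, Function.comp_apply,
    ← iteratedDeriv_eq_iteratedFDeriv, iteratedDeriv_one_sub_I_mul_inv, reCLM_apply]

lemma abs_iteratedDeriv_one_div_one_add_sq_le (k : ℕ) (t : ℝ) :
    |iteratedDeriv k (fun t : ℝ => 1 / (1 + t ^ 2)) t| ≤ (k ! : ℝ) := by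
  have hnorm : 1 ≤ ‖1 - I * t‖ := by simpa using abs_re_le_norm (1 - I * t)
  rw [iteratedDeriv_one_div_one_add_sq]
  calc |(k ! * I ^ k * (1 - I * t) ^ (-(k : ℤ) - 1)).re|
      ≤ ‖(k ! : ℂ) * I ^ k * (1 - I * t) ^ (-(k : ℤ) - 1)‖ := abs_re_le_norm _
    _ = (k ! : ℝ) * (‖1 - I * t‖ ^ (k + 1))⁻¹ := by
      rw [show -(k : ℤ) - 1 = -((k + 1 : ℕ) : ℤ) by push_cast; ring]
      rw [norm_mul, norm_mul, norm_zpow, zpow_neg, zpow_natCast, norm_pow, norm_I, one_pow,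
        mul_one, norm_natCast]
    _ ≤ k ! := mul_le_of_le_one_right (by positivity) (inv_le_one_of_one_le₀ (one_le_pow₀ hnorm))

lemma iteratedDeriv_two_mul_one_div_one_add_sq_zero (m : ℕ) :
    iteratedDeriv (2 * m) (fun t : ℝ => 1 / (1 + t ^ 2)) 0 = (-1) ^ m * ((2 * m) ! : ℝ) := by
  rw [iteratedDeriv_one_div_one_add_sq, pow_mul, I_sq,
    show (-1 : ℂ) ^ m = ((-1 : ℝ) ^ m : ℝ) by push_cast; rfl]
  simp only [ofReal_zero, mul_zero, sub_zero, one_zpow, mul_one]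
  rw [← ofReal_natCast, ← ofReal_mul, ofReal_re, mul_comm]

lemma contDiff_one_div_one_add_sq {n : WithTop ℕ∞} :
    ContDiff ℝ n (fun t : ℝ => 1 / (1 + t ^ 2)) :=
  contDiff_const.div (contDiff_const.add (contDiff_id.pow 2)) fun t => by positivity

lemma iteratedDeriv_one_div_one_add_mul_sq {c : ℝ} (hc : 0 ≤ c) (k : ℕ) (x : ℝ) :
    iteratedDeriv k (fun y : ℝ => 1 / (1 + c * y ^ 2)) x =
      √c ^ k * iteratedDeriv k (fun t : ℝ => 1 / (1 + t ^ 2)) (√c * x) := by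
  have hscale : (fun y : ℝ => 1 / (1 + c * y ^ 2)) = fun y => 1 / (1 + (√c * y) ^ 2) := by
    funext y; rw [mul_pow, Real.sq_sqrt hc]
  rw [hscale, iteratedDeriv_comp_const_mul contDiff_one_div_one_add_sq]

lemma abs_iteratedDeriv_one_div_one_add_mul_sq_le {c : ℝ} (hc : 0 ≤ c) (k : ℕ) (x : ℝ) :
    |iteratedDeriv k (fun y : ℝ => 1 / (1 + c * y ^ 2)) x| ≤ (k ! : ℝ) * √c ^ k := by
  rw [iteratedDeriv_one_div_one_add_mul_sq hc, abs_mul, abs_of_nonneg (by positivity), mul_comm]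
  exact mul_le_mul_of_nonneg_right (abs_iteratedDeriv_one_div_one_add_sq_le k _) (by positivity)

lemma pow_le_abs_iteratedDeriv_two_mul_one_div_one_add_mul_sq {c : ℝ} (hc : 0 ≤ c) (m : ℕ) :
    c ^ m ≤ |iteratedDeriv (2 * m) (fun y : ℝ => 1 / (1 + c * y ^ 2)) 0| := by
  rw [iteratedDeriv_one_div_one_add_mul_sq hc, mul_zero,
    iteratedDeriv_two_mul_one_div_one_add_sq_zero, pow_mul, Real.sq_sqrt hc, abs_mul, abs_mul,
    abs_neg_one_pow, one_mul, abs_of_nonneg (pow_nonneg hc m), Nat.abs_cast]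
  exact le_mul_of_one_le_right (pow_nonneg hc m) (mod_cast (2 * m).factorial_pos)

def HasSlowScaleGrowth (c : ℝ → ℝ) : Prop :=
  ∀ p : ℕ, ∃ C > 0, ∀ ε ∈ Eps, c ε ^ p ≤ C * ε⁻¹

def GInftyEstimatesOn (u : ℝ → ℝ → ℝ) (K : Set ℝ) : Prop :=
  ∃ N : ℕ, ∀ k : ℕ, ∃ C > 0, ∀ ε ∈ Eps, ∀ x ∈ K,
    |iteratedDeriv k (u ε) x| ≤ C * ε ^ (-(N : ℤ))

lemma le_max_one_of_pow_le {x C : ℝ} {n : ℕ} (hn : n ≠ 0) (h : x ^ n ≤ C) : x ≤ max C 1 := by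
  rcases le_or_gt x 1 with hx | hx
  · exact hx.trans (le_max_right C 1)
  · exact (le_self_pow₀ hx.le hn).trans (h.trans (le_max_left C 1))

lemma HasSlowScaleGrowth.gInftyEstimatesOn {c : ℝ → ℝ} (hc : ∀ ε ∈ Eps, 0 ≤ c ε)
    (h : HasSlowScaleGrowth c) (K : Set ℝ) :
    GInftyEstimatesOn (fun ε y => 1 / (1 + c ε * y ^ 2)) K := by
  refine ⟨1, fun k => ?_⟩
  obtain ⟨C, hC, hCk⟩ := h k
  refine ⟨k ! * (C + 1), by positivity, fun ε hε x _ => ?_⟩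
  have hsqrt : √(c ε) ^ k ≤ 1 + c ε ^ k := by
    have hsq : c ε ^ k = (√(c ε) ^ k) ^ 2 := by
      rw [← pow_mul, mul_comm, pow_mul, Real.sq_sqrt (hc ε hε)]
    nlinarith [sq_nonneg (√(c ε) ^ k - 1), pow_nonneg (Real.sqrt_nonneg (c ε)) k]
  have hε_inv : 1 ≤ ε⁻¹ := one_le_inv₀ hε.1 |>.mpr hε.2
  calc |iteratedDeriv k (fun y => 1 / (1 + c ε * y ^ 2)) x|
      ≤ k ! * √(c ε) ^ k := abs_iteratedDeriv_one_div_one_add_mul_sq_le (hc ε hε) k x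
    _ ≤ k ! * (ε⁻¹ + C * ε⁻¹) := by gcongr; linarith [hCk ε hε]
    _ = k ! * (C + 1) * ε ^ (-((1 : ℕ) : ℤ)) := by
      rw [Nat.cast_one, zpow_neg_one]; ring

lemma GInftyEstimatesOn.hasSlowScaleGrowth {c : ℝ → ℝ} {K : Set ℝ}
    (h : GInftyEstimatesOn (fun ε y => 1 / (1 + c ε * y ^ 2)) K)
    (hc : ∀ ε ∈ Eps, 0 ≤ c ε) (hK : 0 ∈ K) : HasSlowScaleGrowth c := by
  obtain ⟨N, hN⟩ := h
  intro p
  obtain ⟨C, hC, hCp⟩ := hN (2 * (p * (N + 1)))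
  refine ⟨max C 1, by positivity, fun ε hε => ?_⟩
  have hε0 : 0 < ε := hε.1
  have hderiv : c ε ^ (p * (N + 1)) ≤ C * ε ^ (-(N : ℤ)) :=
    (pow_le_abs_iteratedDeriv_two_mul_one_div_one_add_mul_sq (hc ε hε) _).trans (hCp ε hε 0 hK)
  have hpow : (c ε ^ p * ε) ^ (N + 1) ≤ C := by
    calc (c ε ^ p * ε) ^ (N + 1) = c ε ^ (p * (N + 1)) * ε ^ (N + 1) := by ring
      _ ≤ C * ε ^ (-(N : ℤ)) * ε ^ (N + 1) := by gcongr
      _ = C * ε := by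
        rw [zpow_neg, zpow_natCast, pow_succ, mul_assoc, inv_mul_cancel_left₀ (by positivity)]
      _ ≤ C := mul_le_of_le_one_right hC.le hε.2
  rw [← div_eq_mul_inv, le_div_iff₀ hε0]
  exact le_max_one_of_pow_le N.succ_ne_zero hpow

/-- for `u_ε(x) = 1/(1+c_ε x²)` with `c_ε ≥ 0`, the `G^∞`-estimates near `0`
hold if and only if `(c_ε)` has slow scale growth (Remark after the noncharacteristic
regularity theorem, following Example 4.6 of H\"ormann–Oberguggenberger). -/
theorem statement11 (c : ℝ → ℝ) (hc : ∀ ε ∈ Eps, 0 ≤ c ε) :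
    (∃ N : ℕ, ∀ k : ℕ, ∃ C > 0, ∀ ε ∈ Eps, ∀ x ∈ Set.Icc (-1 : ℝ) 1,
      |iteratedDeriv k (fun y : ℝ => 1 / (1 + c ε * y ^ 2)) x| ≤ C * ε ^ (-(N : ℤ))) ↔
    (∀ p : ℕ, ∃ C > 0, ∀ ε ∈ Eps, c ε ^ p ≤ C * ε⁻¹) :=
  show GInftyEstimatesOn _ (Set.Icc (-1) 1) ↔ HasSlowScaleGrowth c from
    ⟨fun h => h.hasSlowScaleGrowth hc (by norm_num), fun h => h.gInftyEstimatesOn hc _⟩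
end
end
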